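/- arXiv:1908.10691 — 2 statements merged into one kernel-verified Lean document; each statement's English description precedes it below -/
import Mathlib

section
/- Let d ≥ 2, let P be a stationary and ergodic probability measure on (Ω,F), let r ∈ [1,∞), and let u : Ω × ℤ^d → ℝ be a measurable function such that ∇^*u ∈ Stat_P(ℝ^d), (∇^*u)(·,0) ∈ L^r(Ω,ℝ^d), E_P[(∇^*u)(·,0)] = 0, and for P-almost every ω, (Δ u(ω,·))(x) = 0 for all x ∈ ℤ^d. Then for every x ∈ ℤ^d and P-almost every ω ∈ Ω, u(ω,x) = u(ω,0). -/
open MeasureTheory Filter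
open scoped ENNReal Classical

noncomputable section

/-- Points of the lattice `ℤ^d`. -/
abbrev Zd (d : ℕ) := Fin d → ℤ

/-- The `i`-th standard unit vector of `ℤ^d`. -/
def unitVec {d : ℕ} (i : Fin d) : Zd d := fun j => if j = i then 1 else 0

/-- Environments: a positive conductance for every (unoriented nearest-neighbour) edge,
where the edge `{x, x + e i}` is encoded by the pair `(x, i)`. -/
abbrev Env (d : ℕ) := ((Fin d → ℤ) × Fin d) → {r : ℝ // 0 < r}

/-- The conductance of the edge `{x, x + e i}` in the environment `ω`, as a real number. -/
def cval {d : ℕ} (ω : Env d) (x : Zd d) (i : Fin d) : ℝ := (ω (x, i)).1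

/-- Nearest-neighbour adjacency on `ℤ^d`. -/
def Adj {d : ℕ} (x y : Zd d) : Prop :=
  ∃ i : Fin d, y = x + unitVec i ∨ x = y + unitVec i

/-- The conductance `ω_{xy}` between two nearest neighbours `x ∼ y` (and `0` otherwise). -/
def econd {d : ℕ} (ω : Env d) (x y : Zd d) : ℝ :=
  ∑ i : Fin d, ((if y = x + unitVec i then cval ω x i else 0)
    + (if x = y + unitVec i then cval ω y i else 0))

/-- Discrete gradient `(∇_i u)(x) = u(x+e_i) - u(x)`. -/
def dGrad {d : ℕ} (i : Fin d) (f : Zd d → ℝ) (x : Zd d) : ℝ :=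
  f (x + unitVec i) - f x

/-- Discrete backward gradient `(∇_i^* u)(x) = u(x-e_i) - u(x)`. -/
def dGradStar {d : ℕ} (i : Fin d) (f : Zd d → ℝ) (x : Zd d) : ℝ :=
  f (x - unitVec i) - f x

/-- Discrete divergence `(∇^* ⬝ F)(x) = ∑ i, (F_i(x-e_i) - F_i(x))`. -/
def divStar {d : ℕ} (F : Zd d → Fin d → ℝ) (x : Zd d) : ℝ :=
  ∑ i : Fin d, (F (x - unitVec i) i - F x i)

/-- Discrete Laplacian `Δu = -∑ i, ∇_i^* ∇_i u`. -/
def lap {d : ℕ} (f : Zd d → ℝ) (x : Zd d) : ℝ :=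
  - ∑ i : Fin d, dGradStar i (dGrad i f) x

/-- The open discrete box `D_R = {x : |x|_∞ < R}`. -/
def boxD (d R : ℕ) : Finset (Zd d) :=
  Fintype.piFinset fun _ => Finset.Ioo (-(R : ℤ)) (R : ℤ)

/-- The closed discrete box `D̄_R = {x : |x|_∞ ≤ R}`. -/
def boxC (d R : ℕ) : Finset (Zd d) :=
  Fintype.piFinset fun _ => Finset.Icc (-(R : ℤ)) (R : ℤ)

/-- The discrete boundary `∂D_R = {x : |x|_∞ = R}`. -/
def bdry (d R : ℕ) : Finset (Zd d) := boxC d R \ boxD d R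

/-- The reduced boundary `∂̃D_R` of points of `∂D_R` having a neighbour in `D_R`. -/
def tbdry (d R : ℕ) : Finset (Zd d) :=
  (bdry d R).filter fun x => ∃ y ∈ boxD d R, Adj x y

/-- The oriented edge set `E_R = {(x,y) : x ∼ y, |x+y|_∞ < 2R}`. -/
def ER (d R : ℕ) : Finset (Zd d × Zd d) :=
  ((boxC d R) ×ˢ (boxC d R)).filter fun e =>
    Adj e.1 e.2 ∧ ∀ i, |e.1 i + e.2 i| < 2 * (R : ℤ)

/-- The normal edges `E_R^{nor} = {(x,y) : x ∈ D_R, y ∈ ∂D_R, x ∼ y}`. -/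
def Enor (d R : ℕ) : Finset (Zd d × Zd d) :=
  ((boxD d R) ×ˢ (bdry d R)).filter fun e => Adj e.1 e.2

/-- The tangential edges `E_R^{tan} = {(x,y) : x, y ∈ ∂D_R, x ∼ y}`. -/
def Etan (d R : ℕ) : Finset (Zd d × Zd d) :=
  ((bdry d R) ×ˢ (bdry d R)).filter fun e => Adj e.1 e.2

/-- Normalized `ℓ^r` norm `⦀u⦀_{r,A}` on a finite set. -/
def avNorm {V : Type*} (r : ℝ) (A : Finset V) (u : V → ℝ) : ℝ :=
  ((∑ x ∈ A, |u x| ^ r) / (A.card : ℝ)) ^ (1 / r)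

/-- Sup norm `⦀u⦀_{∞,A}` on a finite set. -/
def supNorm {V : Type*} (A : Finset V) (u : V → ℝ) : ℝ :=
  ⨆ x ∈ A, |u x|

/-- Normalized `ℓ^r` norm for an extended exponent `r ∈ [1,∞]`. -/
def avNormE {V : Type*} (r : ℝ≥0∞) (A : Finset V) (u : V → ℝ) : ℝ :=
  if r = ∞ then supNorm A u else avNorm r.toReal A u

/-- The exponent `2p/(p-1)`, with the convention that it equals `2` for `p = ∞`. -/
def dualExp (p : ℝ≥0∞) : ℝ :=
  if p = ∞ then 2 else 2 * p.toReal / (p.toReal - 1)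

/-- The exponent `2p/(p+1)`, with the convention that it equals `2` for `p = ∞`. -/
def coExp (p : ℝ≥0∞) : ℝ :=
  if p = ∞ then 2 else 2 * p.toReal / (p.toReal + 1)

/-- Euclidean norm on `ℝ^d`. -/
def vecNorm {d : ℕ} (v : Fin d → ℝ) : ℝ := Real.sqrt (∑ i, v i ^ 2)

/-- The translation `τ_a` acting on environments. -/
def shiftEnv {d : ℕ} (a : Zd d) (ω : Env d) : Env d := fun e => ω (e.1 + a, e.2)

/-- Stationarity of a measure on environments. -/
def Stationary {d : ℕ} (P : Measure (Env d)) : Prop :=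
  ∀ a : Zd d, MeasurePreserving (shiftEnv a) P P

/-- Ergodicity of a measure on environments w.r.t. the translations. -/
def ErgodicEnv {d : ℕ} (P : Measure (Env d)) : Prop :=
  ∀ A : Set (Env d), MeasurableSet A → (∀ a : Zd d, shiftEnv a ⁻¹' A = A) →
    P A = 0 ∨ P A = 1

/-- Stationary (`Stat_P`) random fields. -/
def StatP {d : ℕ} {E : Type*} [MeasurableSpace E] (P : Measure (Env d))
    (f : Env d → Zd d → E) : Prop :=
  Measurable (Function.uncurry f) ∧
    ∀ᵐ ω ∂P, ∀ x : Zd d, f ω x = f (shiftEnv x ω) 0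

/-- The horizontal derivative `D_i` on functions of the environment. -/
def Dop {d : ℕ} (i : Fin d) (ζ : Env d → ℝ) : Env d → ℝ :=
  fun ω => ζ (shiftEnv (unitVec i) ω) - ζ ω

/-- The horizontal derivative `D_i^*` on functions of the environment. -/
def DopStar {d : ℕ} (i : Fin d) (ζ : Env d → ℝ) : Env d → ℝ :=
  fun ω => ζ (shiftEnv (-(unitVec i)) ω) - ζ ω

/-- The reflection of `ℤ^d` flipping the `j`-th coordinate. -/
def reflPt {d : ℕ} (j : Fin d) (x : Zd d) : Zd d := fun k => if k = j then -x k else x k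

/-- The reflection `ρ_j` acting on environments. -/
def reflEnv {d : ℕ} (j : Fin d) (ω : Env d) : Env d :=
  fun e => ω (if e.2 = j then reflPt j e.1 - unitVec j else reflPt j e.1, e.2)

/-!
Let `g = (∇^*u)(·, 0)`. Harmonicity of `u` and stationarity of its gradient make each component
of `g` harmonic on the environment: its average over the `2d` neighbouring shifts `τ_{±e_i}`
is itself. For a constant `c`, the triangle inequality gives
`∑ |g ∘ τ_{±e_i} - c| ≥ 2d |g - c|`, and by stationarity both sides have the same integral,
so equality holds a.s.; letting `c` run over `ℚ`, all `2d` neighbouring values coincide a.s.,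
hence equal `g`. Thus `g` is invariant under every shift, ergodicity makes it a.s. equal to its
mean `0`, and a function on `ℤ^d` with vanishing gradient is constant.
-/

lemma abs_sum_lt_sum_abs_of_neg_of_pos {ι : Type*} [Fintype ι] {z : ι → ℝ} {k l : ι}
    (hk : z k < 0) (hl : 0 < z l) : |∑ i, z i| < ∑ i, |z i| := by
  rw [abs_lt, ← neg_lt, ← Finset.sum_neg_distrib]
  exact ⟨Finset.sum_lt_sum (fun i _ => neg_le_abs (z i)) ⟨l, Finset.mem_univ _, by
      rw [abs_of_pos hl]; linarith⟩,
    Finset.sum_lt_sum (fun i _ => le_abs_self (z i)) ⟨k, Finset.mem_univ _, by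
      rw [abs_of_neg hk]; linarith⟩⟩

lemma eq_of_forall_rat_sum_abs_sub_eq {ι : Type*} [Fintype ι] {y : ι → ℝ}
    (h : ∀ c : ℚ, ∑ i, |y i - c| = |∑ i, (y i - c)|) (k l : ι) : y k = y l := by
  have not_lt' : ∀ k l, ¬ y k < y l := fun k l hlt => by
    obtain ⟨c, hkc, hcl⟩ := exists_rat_btwn hlt
    exact (h c).not_gt (abs_sum_lt_sum_abs_of_neg_of_pos (k := k) (l := l)
      (sub_neg.2 hkc) (sub_pos.2 hcl))
  exact le_antisymm (not_lt.1 (not_lt' l k)) (not_lt.1 (not_lt' k l))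

lemma MeasureTheory.MeasurePreserving.integral_comp_of_aestronglyMeasurable {Ω E : Type*}
    [MeasurableSpace Ω] [NormedAddCommGroup E] [NormedSpace ℝ E] {μ : Measure Ω} {T : Ω → Ω}
    (hT : MeasurePreserving T μ μ) {g : Ω → E} (hg : AEStronglyMeasurable g μ) :
    ∫ ω, g (T ω) ∂μ = ∫ ω, g ω ∂μ := by
  have h := integral_map hT.aemeasurable (f := g) (by rw [hT.map_eq]; exact hg)
  rwa [hT.map_eq, eq_comm] at h

section MeanValue

variable {Ω ι : Type*} [MeasurableSpace Ω] {μ : Measure Ω} [IsFiniteMeasure μ] [Fintype ι]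
  {T : ι → Ω → Ω} {f : Ω → ℝ}

lemma ae_sum_abs_sub_comp_eq (hT : ∀ k, MeasurePreserving (T k) μ μ) (hf : Integrable f μ)
    (hmean : ∀ᵐ ω ∂μ, ∑ k, f (T k ω) = Fintype.card ι • f ω) (c : ℝ) :
    ∀ᵐ ω ∂μ, ∑ k, |f (T k ω) - c| = |∑ k, (f (T k ω) - c)| := by
  have hφ : Integrable (fun ω => |f ω - c|) μ := (hf.sub (integrable_const c)).abs
  have hφT : ∀ k, Integrable (fun ω => |f (T k ω) - c|) μ := fun k =>
    ((hT k).integrable_comp hφ.aestronglyMeasurable).2 hφ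
  have hsum_abs : Integrable (fun ω => ∑ k, |f (T k ω) - c|) μ :=
    integrable_finsetSum _ fun k _ => hφT k
  have habs_sum : (fun ω => |∑ k, (f (T k ω) - c)|) =ᵐ[μ]
      fun ω => (Fintype.card ι : ℝ) * |f ω - c| := by
    filter_upwards [hmean] with ω hω
    rw [Finset.sum_sub_distrib, hω, Finset.sum_const, Finset.card_univ, ← smul_sub, abs_nsmul,
      nsmul_eq_mul]
  have habs_sum_int : Integrable (fun ω => |∑ k, (f (T k ω) - c)|) μ :=
    (hφ.const_mul _).congr habs_sum.symm
  -- the gap in the triangle inequality is nonnegative, and has integral zero by stationarity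
  have hgap : (fun ω => ∑ k, |f (T k ω) - c| - |∑ k, (f (T k ω) - c)|) =ᵐ[μ] 0 := by
    refine (integral_eq_zero_iff_of_nonneg
      (fun ω => sub_nonneg.2 (Finset.abs_sum_le_sum_abs _ _)) (hsum_abs.sub habs_sum_int)).1 ?_
    rw [integral_sub hsum_abs habs_sum_int,
      integral_finsetSum _ fun k _ => hφT k, integral_congr_ae habs_sum, integral_const_mul]
    simp [(hT _).integral_comp_of_aestronglyMeasurable hφ.1]
  filter_upwards [hgap] with ω hω
  exact sub_eq_zero.1 hω

lemma comp_ae_eq_of_sum_comp_ae_eq (hT : ∀ k, MeasurePreserving (T k) μ μ)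
    (hf : Integrable f μ)
    (hmean : ∀ᵐ ω ∂μ, ∑ k, f (T k ω) = Fintype.card ι • f ω) (k : ι) :
    f ∘ T k =ᵐ[μ] f := by
  have htri : ∀ᵐ ω ∂μ, ∀ c : ℚ, ∑ k, |f (T k ω) - c| = |∑ k, (f (T k ω) - c)| :=
    ae_all_iff.2 fun c => ae_sum_abs_sub_comp_eq hT hf hmean c
  filter_upwards [htri, hmean] with ω hω_tri hω_mean
  have hconst : ∑ l, f (T l ω) = Fintype.card ι • f (T k ω) := by
    simp [eq_of_forall_rat_sum_abs_sub_eq hω_tri _ k]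
  rw [hconst] at hω_mean
  have : Nonempty ι := ⟨k⟩
  exact nsmul_right_injective Fintype.card_ne_zero hω_mean

end MeanValue

section Shift

variable {d : ℕ}

lemma closure_range_unitVec : AddSubgroup.closure (Set.range (unitVec (d := d))) = ⊤ := by
  refine (AddSubgroup.eq_top_iff' _).2 fun x => ?_
  induction x using Pi.single_induction with
  | zero => exact zero_mem _
  | add x y hx hy => exact add_mem hx hy
  | single i m =>
    have : Pi.single i m = m • unitVec i := by
      funext j
      simp [unitVec, Pi.single_apply]
    rw [this]
    exact zsmul_mem (AddSubgroup.subset_closure (Set.mem_range_self i)) m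

@[elab_as_elim]
lemma unitVec_induction {p : Zd d → Prop} (a : Zd d) (unit : ∀ i, p (unitVec i)) (zero : p 0)
    (add : ∀ a b, p a → p b → p (a + b)) (neg : ∀ a, p a → p (-a)) : p a := by
  have ha : a ∈ AddSubgroup.closure (Set.range unitVec) :=
    closure_range_unitVec (d := d) ▸ AddSubgroup.mem_top a
  induction ha using AddSubgroup.closure_induction with
  | mem _ hx =>
    obtain ⟨i, rfl⟩ := hx
    exact unit i
  | zero => exact zero
  | add a b _ _ ha hb => exact add a b ha hb
  | neg a _ ha => exact neg a ha

lemma apply_add_eq_of_forall_sub_unitVec {X : Type*} {U : Zd d → X}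
    (h : ∀ y i, U (y - unitVec i) = U y) (a y : Zd d) : U (y + a) = U y := by
  induction a using unitVec_induction generalizing y with
  | unit i => rw [← h (y + unitVec i) i, add_sub_cancel_right]
  | zero => rw [add_zero]
  | add a b ha hb => rw [← add_assoc, hb, ha]
  | neg a ha => rw [← ha (y + -a), neg_add_cancel_right]

lemma shiftEnv_shiftEnv (a b : Zd d) (ω : Env d) :
    shiftEnv a (shiftEnv b ω) = shiftEnv (a + b) ω := by
  funext e
  simp [shiftEnv, add_assoc]

lemma shiftEnv_comp_shiftEnv (a b : Zd d) : shiftEnv a ∘ shiftEnv b = shiftEnv (a + b) :=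
  funext (shiftEnv_shiftEnv a b)

@[simp]
lemma shiftEnv_zero (ω : Env d) : shiftEnv (0 : Zd d) ω = ω := by
  funext e
  simp [shiftEnv]

lemma measurable_shiftEnv (a : Zd d) : Measurable (shiftEnv (d := d) a) :=
  measurable_pi_lambda _ fun _ => measurable_pi_apply _

end Shift

section Ergodic

variable {d : ℕ} {P : Measure (Env d)}

lemma Stationary.comp_shiftEnv_ae_eq {X : Type*} (hstat : Stationary P) {ζ : Env d → X}
    (h : ∀ i, ζ ∘ shiftEnv (unitVec i) =ᵐ[P] ζ) (a : Zd d) : ζ ∘ shiftEnv a =ᵐ[P] ζ := by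
  have comp_add : ∀ a b : Zd d, ζ ∘ shiftEnv (a + b) = (ζ ∘ shiftEnv a) ∘ shiftEnv b := by
    intro a b
    funext ω
    simp [shiftEnv_shiftEnv]
  have comp_zero : ζ ∘ shiftEnv 0 = ζ := by
    funext ω
    simp
  induction a using unitVec_induction with
  | unit i => exact h i
  | zero => rw [comp_zero]
  | add a b ha hb =>
    rw [comp_add]
    exact ((hstat b).quasiMeasurePreserving.ae_eq_comp ha).trans hb
  | neg a ha =>
    have h := (hstat (-a)).quasiMeasurePreserving.ae_eq_comp ha
    rw [← comp_add, add_neg_cancel, comp_zero] at h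
    exact h.symm

lemma ErgodicEnv.ae_mem_or_ae_notMem [IsProbabilityMeasure P] (herg : ErgodicEnv P)
    {s : Set (Env d)} (hs : MeasurableSet s) (h : ∀ a, shiftEnv a ⁻¹' s =ᵐ[P] s) :
    (∀ᵐ ω ∂P, ω ∈ s) ∨ ∀ᵐ ω ∂P, ω ∉ s := by
  set A := ⋂ a : Zd d, shiftEnv a ⁻¹' s
  have hA : A =ᵐ[P] s := by
    simpa only [Set.iInter_const] using Filter.EventuallyEq.countable_iInter h
  have hinv : ∀ b, shiftEnv b ⁻¹' A = A := fun b => by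
    simp only [A, Set.preimage_iInter, ← Set.preimage_comp, shiftEnv_comp_shiftEnv]
    exact (add_right_surjective b).iInter_comp fun a => shiftEnv a ⁻¹' s
  rcases herg A (MeasurableSet.iInter fun a => measurable_shiftEnv a hs) hinv with h0 | h1
  · exact .inr (measure_eq_zero_iff_ae_notMem.1 (measure_congr hA ▸ h0))
  · refine .inl ((ae_mem_iff_measure_eq hs.nullMeasurableSet).2 ?_)
    simp [← measure_congr hA, h1]

lemma ErgodicEnv.exists_ae_eq_const {X : Type*} [MeasurableSpace X]
    [MeasurableSpace.CountablySeparated X] [Nonempty X] [IsProbabilityMeasure P]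
    (herg : ErgodicEnv P) {ζ : Env d → X} (hζ : Measurable ζ)
    (h : ∀ a, ζ ∘ shiftEnv a =ᵐ[P] ζ) : ∃ c, ζ =ᵐ[P] Function.const _ c :=
  exists_eventuallyEq_const_of_forall_separating MeasurableSet fun U hU =>
    herg.ae_mem_or_ae_notMem (hζ hU) fun a =>
      Filter.Eventually.set_eq <| (h a).mono fun ω hω => by
      change ζ (shiftEnv a ω) ∈ U ↔ ζ ω ∈ U
      rw [← hω]
      rfl

lemma ErgodicEnv.ae_eq_integral [IsProbabilityMeasure P] (herg : ErgodicEnv P)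
    {ζ : Env d → ℝ} (hζ : Measurable ζ) (h : ∀ a, ζ ∘ shiftEnv a =ᵐ[P] ζ) :
    ζ =ᵐ[P] Function.const _ (∫ ω, ζ ω ∂P) := by
  obtain ⟨c, hc⟩ := herg.exists_ae_eq_const hζ h
  simpa [integral_congr_ae hc] using hc

end Ergodic

section Harmonic

variable {d : ℕ}

def neighborVec : Fin d ⊕ Fin d → Zd d := Sum.elim unitVec fun i => -unitVec i

lemma lap_eq_sum_neighborVec_sub (f : Zd d → ℝ) (x : Zd d) :
    lap f x = ∑ k, f (x + neighborVec k) - Fintype.card (Fin d ⊕ Fin d) • f x := by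
  simp only [lap, dGradStar, dGrad, sub_add_cancel, neighborVec, Fintype.sum_sum_type,
    Sum.elim_inl, Sum.elim_inr, ← sub_eq_add_neg, Finset.sum_sub_distrib, Finset.sum_const,
    Finset.card_univ, Fintype.card_sum, Fintype.card_fin, nsmul_eq_mul]
  push_cast
  ring

lemma lap_sub_translate (f : Zd d → ℝ) (a x : Zd d) :
    lap (fun y => f (y - a) - f y) x = lap f (x - a) - lap f x := by
  simp only [lap_eq_sum_neighborVec_sub, Finset.sum_sub_distrib, add_sub_right_comm x _ a,
    smul_sub]
  abel

lemma ae_sum_shiftEnv_neighborVec_eq {P : Measure (Env d)} {F : Env d → Zd d → ℝ}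
    (hF : ∀ᵐ ω ∂P, ∀ x, F ω x = F (shiftEnv x ω) 0) (hharm : ∀ᵐ ω ∂P, lap (F ω) 0 = 0) :
    ∀ᵐ ω ∂P, ∑ k, F (shiftEnv (neighborVec k) ω) 0 =
      Fintype.card (Fin d ⊕ Fin d) • F ω 0 := by
  filter_upwards [hF, hharm] with ω hF hharm
  rw [lap_eq_sum_neighborVec_sub, sub_eq_zero] at hharm
  simpa only [← hF, zero_add] using hharm

end Harmonic

theorem stationary_gradient_harmonic_constant_general
    (d : ℕ)
    (P : Measure (Env d)) [IsProbabilityMeasure P]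
    (hstat : Stationary P) (herg : ErgodicEnv P)
    (r : ℝ) (hr : 1 ≤ r)
    (u : Env d → Zd d → ℝ)
    (hstatg : StatP P (fun ω x => fun i : Fin d => u ω (x - unitVec i) - u ω x))
    (hint : MemLp (fun ω => fun i : Fin d => u ω (0 - unitVec i) - u ω 0)
      (ENNReal.ofReal r) P)
    (hmean : ∀ i : Fin d, ∫ ω, (u ω (0 - unitVec i) - u ω 0) ∂P = 0)
    (hharm : ∀ᵐ ω ∂P, ∀ x : Zd d, lap (u ω) x = 0) :
    ∀ x : Zd d, ∀ᵐ ω ∂P, u ω x = u ω 0 := by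
  set g : Fin d → Env d → ℝ := fun j ω => u ω (0 - unitVec j) - u ω 0
  have hg_meas (j : Fin d) : Measurable (g j) :=
    (measurable_pi_apply j).comp (hstatg.1.comp (measurable_id.prodMk measurable_const))
  have hg_int (j : Fin d) : Integrable (g j) P :=
    (hint.eval j).integrable (ENNReal.one_le_ofReal.2 hr)
  have hg_mean_value (j : Fin d) :
      ∀ᵐ ω ∂P, ∑ k, g j (shiftEnv (neighborVec k) ω) =
        Fintype.card (Fin d ⊕ Fin d) • g j ω :=
    ae_sum_shiftEnv_neighborVec_eq (F := fun ω y => u ω (y - unitVec j) - u ω y)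
      (hstatg.2.mono fun ω hω y => congrFun (hω y) j)
      (hharm.mono fun ω hω => by rw [lap_sub_translate, hω, hω, sub_zero])
  have hg_inv (j : Fin d) (a : Zd d) : g j ∘ shiftEnv a =ᵐ[P] g j :=
    hstat.comp_shiftEnv_ae_eq (fun i => comp_ae_eq_of_sum_comp_ae_eq
      (fun k => hstat (neighborVec k)) (hg_int j) (hg_mean_value j) (Sum.inl i)) a
  have hg_zero (j : Fin d) : g j =ᵐ[P] 0 := by
    have h := herg.ae_eq_integral (hg_meas j) (hg_inv j)
    rwa [hmean j] at h
  have hgrad : ∀ᵐ ω ∂P, ∀ y j, u ω (y - unitVec j) = u ω y := by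
    have hzero : ∀ᵐ ω ∂P, ∀ y j, g j (shiftEnv y ω) = 0 :=
      ae_all_iff.2 fun y => ae_all_iff.2 fun j => (hg_inv j y).trans (hg_zero j)
    filter_upwards [hstatg.2, hzero] with ω hω_stat hω_zero y j
    exact sub_eq_zero.1 ((congrFun (hω_stat y) j).trans (hω_zero y j))
  intro x
  filter_upwards [hgrad] with ω hω
  simpa using apply_add_eq_of_forall_sub_unitVec hω x 0

/-- Lemma `d21`: if `∇^*u` is stationary, `L^r` at the origin with mean zero,
and `u(ω,·)` is P-a.s. harmonic for the discrete Laplacian, then for every `x`,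
P-a.s. `u(ω,x) = u(ω,0)`. -/
theorem stationary_gradient_harmonic_constant
    (d : ℕ) (hd : 2 ≤ d)
    (P : Measure (Env d)) [IsProbabilityMeasure P]
    (hstat : Stationary P) (herg : ErgodicEnv P)
    (r : ℝ) (hr : 1 ≤ r)
    (u : Env d → Zd d → ℝ) (humeas : Measurable (Function.uncurry u))
    (hstatg : StatP P (fun ω x => fun i : Fin d => u ω (x - unitVec i) - u ω x))
    (hint : MemLp (fun ω => fun i : Fin d => u ω (0 - unitVec i) - u ω 0)
      (ENNReal.ofReal r) P)
    (hmean : ∀ i : Fin d, ∫ ω, (u ω (0 - unitVec i) - u ω 0) ∂P = 0)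
    (hharm : ∀ᵐ ω ∂P, ∀ x : Zd d, lap (u ω) x = 0) :
    ∀ x : Zd d, ∀ᵐ ω ∂P, u ω x = u ω 0 :=
  stationary_gradient_harmonic_constant_general d P hstat herg r hr u hstatg hint hmean hharm
end
end

section
/- Let d ≥ 2, R ∈ ℕ with ∂̃D_R nonempty, c ∈ [1,∞), ε ∈ (0,1), p ∈ (1,∞] (convention 1/∞ = 0), and assume |∂D_R| ≤ c |∂̃D_R|. Let S, Z : ℝ^{∂D_R} → ℝ^{∂D_R} be linear operators such that for all u : ∂D_R → ℝ: ⦀Su⦀_{2p/(p−1), ∂D_R} ≤ c ε^{−(d−1)(p+1)/(2p)} ⦀u⦀_{1, ∂D_R} and ⦀Zu⦀_{1, ∂D_R} ≤ c ⦀u⦀_{1, ∂̃D_R} (the latter implies Zu = 0 whenever u vanishes on ∂̃D_R). Define S^* : ℝ^{∂̃D_R} → ℝ^{∂̃D_R} by (S^*h)(x) = Σ_{y∈∂̃D_R} h(y) (S Z 1_{{x}})(y). Then for all h : ∂̃D_R → ℝ: ⦀S^*h⦀_{∞, ∂̃D_R} ≤ c³ ε^{−(d−1)(p+1)/(2p)}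 ⦀h⦀_{2p/(p+1), ∂̃D_R}. -/
open MeasureTheory Filter
open scoped ENNReal Classical

noncomputable section

/-- The dual smoothing operator `S^*` built from `S` and the modifying operator `Z`. -/
def Sstar (d R : ℕ) (S Z : (Zd d → ℝ) →ₗ[ℝ] (Zd d → ℝ)) (h : Zd d → ℝ) (x : Zd d) : ℝ :=
  ∑ y ∈ tbdry d R, h y * (S (Z (fun z => if z = x then (1 : ℝ) else 0))) y

/-! The value of `S^* h` at `x ∈ ∂̃D_R` is the pairing of `h` with `g = S Z 1_{x}` over
`∂̃D_R`. Hölder's inequality with the conjugate exponents `2p/(p+1)` and `2p/(p-1)` bounds it,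
up to powers of the cardinalities, by `⦀h⦀_{2p/(p+1)}` times `⦀g⦀_{2p/(p-1), ∂D_R}`, and the two hypotheses give
`⦀g⦀_{2p/(p-1)} ≤ c² ε^{-(d-1)(p+1)/(2p)} ⦀1_{x}⦀_{1, ∂̃D_R} = c² ε^{-(d-1)(p+1)/(2p)} / |∂̃D_R|`.
The normalisations leave the factor `(|∂D_R| / |∂̃D_R|)^{(p-1)/(2p)} ≤ c`. -/

lemma holderConjugate_coExp_dualExp {p : ℝ≥0∞} (hp : 1 < p) :
    (coExp p).HolderConjugate (dualExp p) := by
  rw [Real.holderConjugate_iff]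
  rcases eq_or_ne p ∞ with rfl | hp_top
  · norm_num [coExp, dualExp]
  · have ht : 1 < p.toReal := by
      simpa using (ENNReal.toReal_lt_toReal ENNReal.one_ne_top hp_top).mpr hp
    simp only [coExp, dualExp, if_neg hp_top]
    have : p.toReal - 1 ≠ 0 := by linarith
    constructor
    · rw [lt_div_iff₀ (by linarith)]
      linarith
    · field_simp
      ring

lemma rpow_mul_rpow_le_mul_of_le_mul {a b c q q' : ℝ} (hpq : q.HolderConjugate q')
    (ha : 0 ≤ a) (hc : 1 ≤ c) (hb : b ≤ c * a) (hb0 : 0 ≤ b) :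
    a ^ (1 / q) * b ^ (1 / q') ≤ c * a := by
  have hq' : 0 < 1 / q' := one_div_pos.mpr hpq.symm.pos
  calc a ^ (1 / q) * b ^ (1 / q')
      ≤ a ^ (1 / q) * (c * a) ^ (1 / q') := by gcongr
    _ = c ^ (1 / q') * (a ^ (1 / q) * a ^ (1 / q')) := by
        rw [Real.mul_rpow (by linarith) ha]; ring
    _ = c ^ (1 / q') * a := by
        rcases ha.eq_or_lt with rfl | ha
        · rw [Real.zero_rpow hq'.ne', mul_zero, mul_zero]
        · rw [← Real.rpow_add ha, one_div, one_div, hpq.inv_add_inv_eq_one, Real.rpow_one]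
    _ ≤ c * a := by
        gcongr
        exact Real.rpow_le_self_of_one_le hc (div_le_one_of_le₀ hpq.symm.lt.le hpq.symm.nonneg)

section NormalizedNorms

variable {V : Type*}

lemma avNorm_nonneg (r : ℝ) (A : Finset V) (u : V → ℝ) : 0 ≤ avNorm r A u :=
  Real.rpow_nonneg (div_nonneg (Finset.sum_nonneg fun _ _ => by positivity) (by positivity)) _

lemma rpow_sum_abs_rpow_eq_card_rpow_mul_avNorm {A : Finset V} (hA : A.Nonempty) (r : ℝ)
    (u : V → ℝ) :
    (∑ x ∈ A, |u x| ^ r) ^ (1 / r) = (A.card : ℝ) ^ (1 / r) * avNorm r A u := by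
  have hcard : (0 : ℝ) < A.card := by exact_mod_cast hA.card_pos
  rw [avNorm, ← Real.mul_rpow hcard.le
    (div_nonneg (Finset.sum_nonneg fun _ _ => by positivity) hcard.le), mul_div_cancel₀ _ hcard.ne']

lemma avNorm_one_indicator [DecidableEq V] {A : Finset V} {x : V} (hx : x ∈ A) :
    avNorm 1 A (fun z => if z = x then (1 : ℝ) else 0) = (A.card : ℝ)⁻¹ := by
  have hsum : ∑ z ∈ A, |(if z = x then (1 : ℝ) else 0)| ^ (1 : ℝ) = 1 := by
    simp [apply_ite (fun t : ℝ => |t|), hx]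
  rw [avNorm, hsum, div_one, Real.rpow_one, one_div]

lemma abs_sum_mul_le_card_rpow_mul_avNorm {T B : Finset V} (hTB : T ⊆ B) (hT : T.Nonempty)
    {q q' : ℝ} (hpq : q.HolderConjugate q') (h g : V → ℝ) :
    |∑ y ∈ T, h y * g y|
      ≤ (T.card : ℝ) ^ (1 / q) * (B.card : ℝ) ^ (1 / q') * avNorm q T h * avNorm q' B g := by
  have hholder := Real.inner_le_Lp_mul_Lq T (fun y => |h y|) (fun y => |g y|) hpq
  simp only [abs_abs] at hholder
  calc |∑ y ∈ T, h y * g y| ≤ ∑ y ∈ T, |h y| * |g y| := by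
        simpa only [abs_mul] using Finset.abs_sum_le_sum_abs (fun y => h y * g y) T
    _ ≤ (∑ y ∈ T, |h y| ^ q) ^ (1 / q) * (∑ y ∈ T, |g y| ^ q') ^ (1 / q') := hholder
    _ ≤ (∑ y ∈ T, |h y| ^ q) ^ (1 / q) * (∑ y ∈ B, |g y| ^ q') ^ (1 / q') := by
        have := one_div_pos.mpr hpq.symm.pos
        gcongr
    _ = _ := by
        rw [rpow_sum_abs_rpow_eq_card_rpow_mul_avNorm hT,
          rpow_sum_abs_rpow_eq_card_rpow_mul_avNorm (hT.mono hTB)]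
        ring

lemma supNorm_le {A : Finset V} {u : V → ℝ} {M : ℝ} (hM : 0 ≤ M)
    (hu : ∀ x ∈ A, |u x| ≤ M) : supNorm A u ≤ M :=
  Real.iSup_le (fun x => Real.iSup_le (hu x) hM) hM

end NormalizedNorms

theorem dual_smoothing_sup_bound_general
    (d : ℕ) (R : ℕ) (hne : (tbdry d R).Nonempty)
    (c : ℝ) (hc : 1 ≤ c) (ε : ℝ) (hε : ε ∈ Set.Ioo (0 : ℝ) 1) (p : ℝ≥0∞) (hp : 1 < p)
    (hcard : ((bdry d R).card : ℝ) ≤ c * ((tbdry d R).card : ℝ))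
    (S Z : (Zd d → ℝ) →ₗ[ℝ] (Zd d → ℝ))
    (hS : ∀ u : Zd d → ℝ,
      avNorm (dualExp p) (bdry d R) (S u)
        ≤ c * ε ^ (-(((d : ℝ) - 1) * (1 / coExp p))) * avNorm 1 (bdry d R) u)
    (hZ : ∀ u : Zd d → ℝ,
      avNorm 1 (bdry d R) (Z u) ≤ c * avNorm 1 (tbdry d R) u) :
    ∀ h : Zd d → ℝ,
      supNorm (tbdry d R) (Sstar d R S Z h)
        ≤ c ^ 3 * ε ^ (-(((d : ℝ) - 1) * (1 / coExp p)))
            * avNorm (coExp p) (tbdry d R) h := by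
  intro h
  set γ := ε ^ (-(((d : ℝ) - 1) * (1 / coExp p)))
  have hγ : 0 ≤ γ := Real.rpow_nonneg hε.1.le _
  have hc0 : 0 ≤ c := zero_le_one.trans hc
  have hT : (0 : ℝ) < (tbdry d R).card := by exact_mod_cast hne.card_pos
  have hTB : tbdry d R ⊆ bdry d R := Finset.filter_subset _ _
  have hpq := holderConjugate_coExp_dualExp hp
  have hN := avNorm_nonneg (coExp p) (tbdry d R) h
  refine supNorm_le (by positivity) fun x hx => ?_
  have hSZ : avNorm (dualExp p) (bdry d R) (S (Z fun z => if z = x then 1 else 0))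
      ≤ c * γ * (c * ((tbdry d R).card : ℝ)⁻¹) := by
    refine (hS _).trans (mul_le_mul_of_nonneg_left ?_ (by positivity))
    simpa only [avNorm_one_indicator hx] using hZ fun z => if z = x then 1 else 0
  calc |Sstar d R S Z h x|
      ≤ ((tbdry d R).card : ℝ) ^ (1 / coExp p) * ((bdry d R).card : ℝ) ^ (1 / dualExp p)
          * avNorm (coExp p) (tbdry d R) h
          * avNorm (dualExp p) (bdry d R) (S (Z fun z => if z = x then 1 else 0)) :=
        abs_sum_mul_le_card_rpow_mul_avNorm hTB hne hpq _ _
    _ ≤ c * (tbdry d R).card * avNorm (coExp p) (tbdry d R) h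
          * (c * γ * (c * ((tbdry d R).card : ℝ)⁻¹)) := by
        gcongr ?_ * _ * ?_
        · exact avNorm_nonneg _ _ _
        · exact rpow_mul_rpow_le_mul_of_le_mul hpq hT.le hc hcard (by positivity)
    _ = c ^ 3 * γ * avNorm (coExp p) (tbdry d R) h := by
        field_simp

/-- Lemma `d09`: under an `L^1 → L^{2p/(p-1)}` smoothing bound on `S`
(with loss `ε^{-(d-1)(p+1)/(2p)}`) and an `L^1` bound on `Z`,
`⦀S^* h⦀_{∞, ∂̃D_R} ≤ c³ ε^{-(d-1)(p+1)/(2p)} ⦀h⦀_{2p/(p+1), ∂̃D_R}`.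
Here `(p+1)/(2p) = 1/coExp p`. -/
theorem dual_smoothing_sup_bound
    (d : ℕ) (hd : 2 ≤ d) (R : ℕ) (hne : (tbdry d R).Nonempty)
    (c : ℝ) (hc : 1 ≤ c) (ε : ℝ) (hε : ε ∈ Set.Ioo (0 : ℝ) 1) (p : ℝ≥0∞) (hp : 1 < p)
    (hcard : ((bdry d R).card : ℝ) ≤ c * ((tbdry d R).card : ℝ))
    (S Z : (Zd d → ℝ) →ₗ[ℝ] (Zd d → ℝ))
    (hS : ∀ u : Zd d → ℝ,
      avNorm (dualExp p) (bdry d R) (S u)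
        ≤ c * ε ^ (-(((d : ℝ) - 1) * (1 / coExp p))) * avNorm 1 (bdry d R) u)
    (hZ : ∀ u : Zd d → ℝ,
      avNorm 1 (bdry d R) (Z u) ≤ c * avNorm 1 (tbdry d R) u) :
    ∀ h : Zd d → ℝ,
      supNorm (tbdry d R) (Sstar d R S Z h)
        ≤ c ^ 3 * ε ^ (-(((d : ℝ) - 1) * (1 / coExp p)))
            * avNorm (coExp p) (tbdry d R) h :=
  dual_smoothing_sup_bound_general d R hne c hc ε hε p hp hcard S Z hS hZ

end
end
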